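/- Let Φ₀ ~ N(0,1) and Ξ₀² ~ χ²(N) be independent, and define Φ₁ conditionally on (Φ₀, Ξ₀²) = (φ₀, ξ₀²) to be normal with mean m(φ₀,ξ₀²) = e^{-η²ξ₀²/2}(φ₀ - ηξ₀²) and variance v(ξ₀²) = 1 - e^{-η²ξ₀²}(1+η²ξ₀²). Then E[Φ₁] = -Nη(η²+1)^{-N/2-1}. -/

import Mathlib

/-!
Conditionally on `Ξ₀² = ξ`, the mean of `Φ₁` is affine in `φ₀`, so averaging against the standard
normal density simply drops the `φ₀`-term. What remains are two integrals against the `χ²(N)`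
density: its Laplace transform `E[e^{-sΞ}] = (1 + 2s)^{-N/2}` and the tilted first moment
`E[Ξ e^{-sΞ}] = N (1 + 2s)^{-N/2-1}`, the latter reduced to the former through
`ξ · χ²_N(ξ) = N · χ²_{N+2}(ξ)`. Take `s = η²/2`.
-/

open Real Set MeasureTheory ProbabilityTheory

/-- Chi-squared density with `N` degrees of freedom. -/
noncomputable def chiSqPDF (N : ℕ) (z : ℝ) : ℝ :=
  z ^ ((N : ℝ) / 2 - 1) * Real.exp (-z / 2) / (2 ^ ((N : ℝ) / 2) * Real.Gamma ((N : ℝ) / 2))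

/-- Standard normal density. -/
noncomputable def stdNormalPDF (x : ℝ) : ℝ :=
  (2 * π) ^ (-(1 / 2 : ℝ)) * Real.exp (-x ^ 2 / 2)

/-- Conditional mean of `Φ₁` given `Φ₀ = φ₀` and `Ξ₀² = ξ`. -/
noncomputable def condMean (η φ₀ ξ : ℝ) : ℝ :=
  Real.exp (-η ^ 2 * ξ / 2) * (φ₀ - η * ξ)

lemma stdNormalPDF_eq_gaussianPDFReal : stdNormalPDF = gaussianPDFReal 0 1 := by
  ext x
  simp [stdNormalPDF, gaussianPDFReal, sqrt_eq_rpow, rpow_neg (by positivity : (0:ℝ) ≤ 2 * π)]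

lemma integral_stdNormalPDF_mul_affine (a b : ℝ) :
    ∫ x, stdNormalPDF x * (a * x + b) = b := by
  have h := integral_gaussianReal_eq_integral_smul (μ := 0) (f := fun x ↦ a * x + b) one_ne_zero
  simp only [smul_eq_mul] at h
  have hid : Integrable (fun x ↦ x) (gaussianReal 0 1) := (memLp_id_gaussianReal 1).integrable le_rfl
  rw [stdNormalPDF_eq_gaussianPDFReal, ← h, integral_add (hid.const_mul a) (integrable_const b),
    integral_const_mul, integral_id_gaussianReal]
  simp

lemma integral_exp_neg_mul_mul_chiSqPDF {N : ℕ} (hN : 0 < N) {s : ℝ} (hs : 0 < 1 + 2 * s) :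
    ∫ ξ in Ioi 0, exp (-(s * ξ)) * chiSqPDF N ξ = (1 + 2 * s) ^ (-(N : ℝ) / 2) := by
  set a : ℝ := (N : ℝ) / 2
  set r : ℝ := (1 + 2 * s) / 2
  have ha : 0 < a := by positivity
  have hr : 0 < r := by positivity
  have hΓ : Gamma a ≠ 0 := (Gamma_pos_of_pos ha).ne'
  have hdensity : ∀ ξ, exp (-(s * ξ)) * chiSqPDF N ξ
      = (2 ^ a * Gamma a)⁻¹ * (ξ ^ (a - 1) * exp (-(r * ξ))) := fun ξ ↦ by
    rw [chiSqPDF, show -(r * ξ) = -(s * ξ) + -ξ / 2 by ring, exp_add]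
    ring
  simp_rw [hdensity]
  rw [integral_const_mul, integral_rpow_mul_exp_neg_mul_Ioi ha hr, show -(N : ℝ) / 2 = -a by ring,
    show 1 + 2 * s = 2 * r by ring, rpow_neg (by positivity), mul_rpow zero_le_two hr.le,
    div_rpow zero_le_one hr.le, one_rpow]
  field_simp

lemma mul_chiSqPDF {N : ℕ} (hN : 0 < N) {ξ : ℝ} (hξ : ξ ≠ 0) :
    ξ * chiSqPDF N ξ = N * chiSqPDF (N + 2) ξ := by
  set a : ℝ := (N : ℝ) / 2
  have ha : a ≠ 0 := by positivity
  have hΓ : Gamma a ≠ 0 := (Gamma_pos_of_pos (by positivity)).ne'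
  have hshift : ((N + 2 : ℕ) : ℝ) / 2 = a + 1 := by push_cast; ring
  rw [chiSqPDF, chiSqPDF, hshift, Gamma_add_one ha, rpow_add_one two_ne_zero, add_sub_cancel_right,
    show ξ ^ a = ξ ^ (a - 1 + 1) by ring_nf, rpow_add_one hξ, show (N : ℝ) = 2 * a by ring]
  field_simp

lemma integral_mul_exp_neg_mul_mul_chiSqPDF {N : ℕ} (hN : 0 < N) {s : ℝ} (hs : 0 < 1 + 2 * s) :
    ∫ ξ in Ioi 0, ξ * (exp (-(s * ξ)) * chiSqPDF N ξ) = N * (1 + 2 * s) ^ (-(N : ℝ) / 2 - 1) := by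
  have hshift : ∀ ξ ∈ Ioi (0 : ℝ), ξ * (exp (-(s * ξ)) * chiSqPDF N ξ)
      = N * (exp (-(s * ξ)) * chiSqPDF (N + 2) ξ) := fun ξ hξ ↦ by
    rw [mul_left_comm, mul_chiSqPDF hN (ne_of_gt hξ)]
    ring
  rw [setIntegral_congr_fun measurableSet_Ioi hshift, integral_const_mul,
    integral_exp_neg_mul_mul_chiSqPDF (by omega) hs]
  congr 2
  push_cast
  ring

lemma integral_condMean_mul_chiSqPDF {N : ℕ} (hN : 0 < N) (η φ₀ : ℝ) :
    ∫ ξ in Ioi 0, condMean η φ₀ ξ * chiSqPDF N ξ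
      = (η ^ 2 + 1) ^ (-(N : ℝ) / 2) * φ₀ + -(N * η * (η ^ 2 + 1) ^ (-(N : ℝ) / 2 - 1)) := by
  have hs : 0 < 1 + 2 * (η ^ 2 / 2) := by positivity
  have hsplit : ∀ ξ, condMean η φ₀ ξ * chiSqPDF N ξ
      = φ₀ * (exp (-(η ^ 2 / 2 * ξ)) * chiSqPDF N ξ)
        - η * (ξ * (exp (-(η ^ 2 / 2 * ξ)) * chiSqPDF N ξ)) := fun ξ ↦ by
    rw [condMean, show -η ^ 2 * ξ / 2 = -(η ^ 2 / 2 * ξ) by ring]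
    ring
  have hint₀ := Integrable.of_integral_ne_zero
    (by rw [integral_exp_neg_mul_mul_chiSqPDF hN hs]; positivity)
  have hint₁ := Integrable.of_integral_ne_zero
    (by rw [integral_mul_exp_neg_mul_mul_chiSqPDF hN hs]; positivity)
  simp_rw [hsplit]
  rw [integral_sub (hint₀.const_mul φ₀) (hint₁.const_mul η), integral_const_mul,
    integral_const_mul, integral_exp_neg_mul_mul_chiSqPDF hN hs,
    integral_mul_exp_neg_mul_mul_chiSqPDF hN hs, show 1 + 2 * (η ^ 2 / 2) = η ^ 2 + 1 by ring]
  ring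

theorem expected_field_after_one_step_general (N : ℕ) (hN : 0 < N) (η : ℝ) :
    ∫ φ₀ : ℝ, stdNormalPDF φ₀ *
        ∫ ξ in Ioi (0 : ℝ), condMean η φ₀ ξ * chiSqPDF N ξ
      = -(N : ℝ) * η * (η ^ 2 + 1) ^ (-(N : ℝ) / 2 - 1) := by
  simp_rw [integral_condMean_mul_chiSqPDF hN, integral_stdNormalPDF_mul_affine]
  ring

/-- With `Φ₀ ~ N(0,1)` and `Ξ₀² ~ χ²(N)` independent, and `Φ₁` conditionally
normal with mean `e^{-η²ξ/2}(φ₀ - ηξ)`, the expectation of `Φ₁` (i.e. of the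
conditional mean) equals `-Nη(η²+1)^{-N/2-1}`. -/
theorem expected_field_after_one_step (N : ℕ) (hN : 0 < N) (η : ℝ) (hη : 0 < η) :
    ∫ φ₀ : ℝ, stdNormalPDF φ₀ *
        ∫ ξ in Ioi (0 : ℝ), condMean η φ₀ ξ * chiSqPDF N ξ
      = -(N : ℝ) * η * (η ^ 2 + 1) ^ (-(N : ℝ) / 2 - 1) :=
  expected_field_after_one_step_general N hN η
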